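/- Let X₁, X₂, X₃, ... be independent, identically distributed real-valued random variables and define the wave process W(ω,t) = X_{⌊t⌋}(ω)·sin(2πt) for t ≥ 0. Then for every Borel set B ⊆ ℝ, almost surely lim_{s→∞} (1/s)·m({t ∈ [0,s] : W(ω,t) ∈ B}) = E[m({t ∈ [0,1] : X₁·sin(2πt) ∈ B})], where m is Lebesgue measure. In particular, the wave process W has a limiting average occupation measure μ_W, i.e., W satisfies the wave steady-state assumption. -/

import Mathlib

/-!
On `[j, j + 1)` the wave is `X_j · sin(2πt)`, and since `sin(2π·)` has period 1 the time it spends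
in `B` there is `φ(X_j)`, where `φ(a) = m{t ∈ [0, 1] : a · sin(2πt) ∈ B}`. So the occupation time
up to an integer `n` is `∑_{j < n} φ(X_j)`, and the strong law of large numbers makes its average
converge almost surely to `E[φ(X₁)]`; as the occupation time is monotone in `s`, the limit along
the integers is also the limit along the reals. Finally `E[φ(X₁)] = μ_W(B)` for `μ_W` the law of
`X₁ · sin(2πU)` with `U` uniform on `[0, 1]` and independent of `X₁`.
-/

open MeasureTheory Filter Set ProbabilityTheory Function
open scoped ENNReal Topology

theorem tendsto_div_of_monotone_of_tendsto_natCast_div {g : ℝ → ℝ} {L : ℝ} (hg : Monotone g)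
    (hL : Tendsto (fun n : ℕ => g n / n) atTop (𝓝 L)) :
    Tendsto (fun s => g s / s) atTop (𝓝 L) := by
  have hfloor : Tendsto (fun s : ℝ => g ⌊s⌋₊ / ⌊s⌋₊ * (⌊s⌋₊ / s)) atTop (𝓝 L) := by
    simpa using (hL.comp tendsto_nat_floor_atTop).mul tendsto_nat_floor_div_atTop
  have hceil : Tendsto (fun s : ℝ => g ⌈s⌉₊ / ⌈s⌉₊ * (⌈s⌉₊ / s)) atTop (𝓝 L) := by
    simpa using (hL.comp tendsto_nat_ceil_atTop).mul tendsto_nat_ceil_div_atTop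
  refine tendsto_of_tendsto_of_tendsto_of_le_of_le' hfloor hceil ?_ ?_
  all_goals filter_upwards [eventually_ge_atTop 1] with s hs
  · have hfloor_pos : (0 : ℝ) < ⌊s⌋₊ := by exact_mod_cast Nat.floor_pos.2 hs
    rw [div_mul_div_cancel₀ hfloor_pos.ne']
    exact div_le_div_of_nonneg_right (hg (Nat.floor_le (by linarith))) (by linarith)
  · have hceil_pos : (0 : ℝ) < ⌈s⌉₊ := by exact_mod_cast Nat.ceil_pos.2 (by linarith)
    rw [div_mul_div_cancel₀ hceil_pos.ne']
    exact div_le_div_of_nonneg_right (hg (Nat.le_ceil s)) (by linarith)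

section OccupationTime

variable {β : Type*}

noncomputable def occupationTime (w : ℝ → β) (B : Set β) (s : ℝ) : ℝ≥0∞ :=
  volume {t ∈ Icc (0 : ℝ) s | w t ∈ B}

theorem occupationTime_ne_top (w : ℝ → β) (B : Set β) (s : ℝ) : occupationTime w B s ≠ ∞ :=
  ((measure_mono (sep_subset _ _)).trans_lt measure_Icc_lt_top).ne

theorem occupationTime_mono (w : ℝ → β) (B : Set β) : Monotone (occupationTime w B) :=
  fun _ _ hst => measure_mono fun _ ⟨ht, hw⟩ => ⟨Icc_subset_Icc_right hst ht, hw⟩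

theorem monotone_toReal_occupationTime (w : ℝ → β) (B : Set β) :
    Monotone fun s => (occupationTime w B s).toReal :=
  fun _ _ hst => ENNReal.toReal_mono (occupationTime_ne_top w B _) (occupationTime_mono w B hst)

theorem toReal_occupationTime_le (w : ℝ → β) (B : Set β) {s : ℝ} (hs : 0 ≤ s) :
    (occupationTime w B s).toReal ≤ s := by
  refine ENNReal.toReal_le_of_le_ofReal hs ((measure_mono (sep_subset _ _)).trans ?_)
  simp

theorem occupationTime_eq_volume_Ico (w : ℝ → β) (B : Set β) (s : ℝ) :
    occupationTime w B s = volume (Ico 0 s ∩ w ⁻¹' B) :=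
  measure_congr (Ico_ae_eq_Icc.inter EventuallyEq.rfl).symm

theorem volume_Ico_nat_inter_preimage {w : ℝ → β} (hw : Periodic w 1) (B : Set β) (j : ℕ) :
    volume (Ico (j : ℝ) (j + 1) ∩ w ⁻¹' B) = occupationTime w B 1 := by
  rw [occupationTime_eq_volume_Ico, ← measure_preimage_add_right volume (j : ℝ), preimage_inter,
    preimage_add_const_Ico, sub_self, add_sub_cancel_left]
  congr 2
  ext t
  simp only [mem_preimage, (by simpa using hw.nat_mul j : Periodic w j) t]

theorem occupationTime_floor_natCast [MeasurableSpace β] {w : ℕ → ℝ → β}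
    (hw : ∀ j, Periodic (w j) 1) (hwm : ∀ j, Measurable (w j)) {B : Set β} (hB : MeasurableSet B)
    (n : ℕ) :
    occupationTime (fun t => w ⌊t⌋₊ t) B n = ∑ j ∈ Finset.range n, occupationTime (w j) B 1 := by
  rw [occupationTime_eq_volume_Ico]
  induction n with
  | zero => simp
  | succ n ih =>
    have hlast :
        Ico (n : ℝ) (n + 1) ∩ (fun t => w ⌊t⌋₊ t) ⁻¹' B = Ico (n : ℝ) (n + 1) ∩ w n ⁻¹' B := by
      ext t
      simp +contextual [Nat.floor_eq_on_Ico n t]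
    rw [Finset.sum_range_succ, ← ih, ← volume_Ico_nat_inter_preimage (hw n) B n, ← hlast,
      ← measure_union, ← union_inter_distrib_right, Nat.cast_succ,
      Ico_union_Ico_eq_Ico n.cast_nonneg (by linarith)]
    · exact disjoint_of_subset inter_subset_left inter_subset_left Ico_disjoint_Ico_same
    · rw [hlast]; exact measurableSet_Ico.inter (hwm n hB)

theorem tendsto_occupationTime_floor_div [MeasurableSpace β] {w : ℕ → ℝ → β}
    (hw : ∀ j, Periodic (w j) 1) (hwm : ∀ j, Measurable (w j)) {B : Set β} (hB : MeasurableSet B)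
    {L : ℝ}
    (hL : Tendsto (fun n : ℕ => (∑ j ∈ Finset.range n, (occupationTime (w j) B 1).toReal) / n)
      atTop (𝓝 L)) :
    Tendsto (fun s => (occupationTime (fun t => w ⌊t⌋₊ t) B s).toReal / s) atTop (𝓝 L) := by
  refine tendsto_div_of_monotone_of_tendsto_natCast_div (monotone_toReal_occupationTime _ B) ?_
  simpa only [occupationTime_floor_natCast hw hwm hB,
    ENNReal.toReal_sum fun j _ => occupationTime_ne_top (w j) B 1] using hL

theorem occupationTime_eq_restrict_apply (w : ℝ → β) (B : Set β) (s : ℝ) :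
    occupationTime w B s = volume.restrict (Icc 0 s) (w ⁻¹' B) := by
  rw [Measure.restrict_apply' measurableSet_Icc, inter_comm]
  rfl

variable [MeasurableSpace β] {α : Type*} [MeasurableSpace α] {F : α → ℝ → β}

theorem measurable_occupationTime (hF : Measurable (uncurry F)) {B : Set β} (hB : MeasurableSet B)
    (s : ℝ) : Measurable fun a => occupationTime (F a) B s := by
  simp_rw [occupationTime_eq_restrict_apply]
  exact measurable_measure_prodMk_left (hF hB)

theorem toReal_map_prod_apply_eq_integral_occupationTime (hF : Measurable (uncurry F))
    {Ω : Type*} [MeasurableSpace Ω] {P : Measure Ω} {Y : Ω → α} (hY : AEMeasurable Y P)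
    {B : Set β} (hB : MeasurableSet B) :
    (((P.map Y).prod (volume.restrict (Icc 0 1))).map (uncurry F) B).toReal =
      ∫ ω, (occupationTime (F (Y ω)) B 1).toReal ∂P := by
  have hocc := measurable_occupationTime hF hB 1
  rw [integral_toReal (f := fun ω => occupationTime (F (Y ω)) B 1) (hocc.comp_aemeasurable hY)
      (ae_of_all _ fun ω => (occupationTime_ne_top _ B 1).lt_top),
    ← lintegral_map' hocc.aemeasurable hY, Measure.map_apply hF hB, Measure.prod_apply (hF hB)]
  simp_rw [occupationTime_eq_restrict_apply]
  rfl

end OccupationTime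

theorem tendsto_average_comp_of_pairwise_indepFun {Ω α : Type*} [MeasurableSpace Ω]
    [MeasurableSpace α] {P : Measure Ω} {X : ℕ → Ω → α}
    (hindep : Pairwise fun i j => IndepFun (X i) (X j) P)
    {k : ℕ} (hident : ∀ j, IdentDistrib (X j) (X k) P P) {φ : α → ℝ} (hφ : Measurable φ)
    (hint : Integrable (fun ω => φ (X k ω)) P) :
    ∀ᵐ ω ∂P, Tendsto (fun n : ℕ => (∑ j ∈ Finset.range n, φ (X j ω)) / n) atTop
      (𝓝 (∫ ω, φ (X k ω) ∂P)) := by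
  have hident₀ : ∀ j, IdentDistrib (X j) (X 0) P P := fun j => (hident j).trans (hident 0).symm
  have hlimit : ∫ ω, φ (X 0 ω) ∂P = ∫ ω, φ (X k ω) ∂P := ((hident 0).comp hφ).integral_eq
  rw [← hlimit]
  exact strong_law_ae_real (fun j ω => φ (X j ω)) (((hident 0).comp hφ).integrable_iff.2 hint)
    (fun _ _ hij => (hindep hij).comp hφ hφ) fun j => (hident₀ j).comp hφ

theorem wave_process_steady_state_general
    {Ω : Type*} [MeasurableSpace Ω] (P : Measure Ω) [IsProbabilityMeasure P]
    (X : ℕ → Ω → ℝ)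
    (hindep : iIndepFun X P)
    (hident : ∀ j, IdentDistrib (X j) (X 1) P P) :
    (∀ B : Set ℝ, MeasurableSet B →
      ∀ᵐ ω ∂P, Tendsto
        (fun s : ℝ =>
          (volume {t ∈ Set.Icc (0 : ℝ) s | X ⌊t⌋₊ ω * Real.sin (2 * Real.pi * t) ∈ B}).toReal
            / s)
        atTop
        (nhds (∫ ω', (volume {t ∈ Set.Icc (0 : ℝ) 1 |
            X 1 ω' * Real.sin (2 * Real.pi * t) ∈ B}).toReal ∂P))) ∧
    ∃ μW : Measure ℝ, IsProbabilityMeasure μW ∧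
      ∀ B : Set ℝ, MeasurableSet B →
        ∀ᵐ ω ∂P, Tendsto
          (fun s : ℝ =>
            (volume {t ∈ Set.Icc (0 : ℝ) s | X ⌊t⌋₊ ω * Real.sin (2 * Real.pi * t) ∈ B}).toReal
              / s)
          atTop (nhds (μW B).toReal) := by
  set F : ℝ → ℝ → ℝ := fun a t => a * Real.sin (2 * Real.pi * t)
  have hF : Measurable (uncurry F) := by fun_prop
  have hperiodic : ∀ a, Periodic (F a) 1 := fun a t => by
    simp only [F, mul_add, mul_one, Real.sin_add_two_pi]
  have hX₁ : AEMeasurable (X 1) P := (hident 1).aemeasurable_fst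
  have hocc : ∀ B, MeasurableSet B → ∀ᵐ ω ∂P, Tendsto
      (fun s => (occupationTime (fun t => F (X ⌊t⌋₊ ω) t) B s).toReal / s) atTop
      (𝓝 (∫ ω', (occupationTime (F (X 1 ω')) B 1).toReal ∂P)) := by
    intro B hB
    have hφ := (measurable_occupationTime hF hB 1).ennreal_toReal
    have hint : Integrable (fun ω => (occupationTime (F (X 1 ω)) B 1).toReal) P :=
      .of_bound (hφ.comp_aemeasurable hX₁).aestronglyMeasurable 1 <| ae_of_all _ fun ω => by
        simpa using toReal_occupationTime_le (F (X 1 ω)) B zero_le_one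
    filter_upwards [tendsto_average_comp_of_pairwise_indepFun (fun _ _ hij => hindep.indepFun hij)
      hident hφ hint] with ω hω
    exact tendsto_occupationTime_floor_div (fun j => hperiodic (X j ω)) (fun j => by fun_prop) hB hω
  have := Measure.isProbabilityMeasure_map (μ := P) hX₁
  have : IsProbabilityMeasure (volume.restrict (Icc (0 : ℝ) 1)) := ⟨by simp⟩
  refine ⟨hocc, ((P.map (X 1)).prod (volume.restrict (Icc 0 1))).map (uncurry F),
    Measure.isProbabilityMeasure_map hF.aemeasurable, fun B hB => ?_⟩
  rw [toReal_map_prod_apply_eq_integral_occupationTime hF hX₁ hB]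
  exact hocc B hB

/-- For i.i.d. wave crest heights `X₁, X₂, …`, the wave process
`W(ω,t) = X_{⌊t⌋}(ω) · sin(2πt)` has, for every Borel set `B ⊆ ℝ`, almost surely a limiting
average occupation time equal to `E[m({t ∈ [0,1] : X₁·sin(2πt) ∈ B})]`.  In particular `W`
has a limiting average occupation measure `μ_W`, i.e. it satisfies the wave steady-state
assumption. -/
theorem wave_process_steady_state
    {Ω : Type*} [MeasurableSpace Ω] (P : Measure Ω) [IsProbabilityMeasure P]
    (X : ℕ → Ω → ℝ) (hmeas : ∀ j, Measurable (X j))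
    (hindep : iIndepFun X P)
    (hident : ∀ j, IdentDistrib (X j) (X 1) P P) :
    (∀ B : Set ℝ, MeasurableSet B →
      ∀ᵐ ω ∂P, Tendsto
        (fun s : ℝ =>
          (volume {t ∈ Set.Icc (0 : ℝ) s | X ⌊t⌋₊ ω * Real.sin (2 * Real.pi * t) ∈ B}).toReal
            / s)
        atTop
        (nhds (∫ ω', (volume {t ∈ Set.Icc (0 : ℝ) 1 |
            X 1 ω' * Real.sin (2 * Real.pi * t) ∈ B}).toReal ∂P))) ∧
    ∃ μW : Measure ℝ, IsProbabilityMeasure μW ∧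
      ∀ B : Set ℝ, MeasurableSet B →
        ∀ᵐ ω ∂P, Tendsto
          (fun s : ℝ =>
            (volume {t ∈ Set.Icc (0 : ℝ) s | X ⌊t⌋₊ ω * Real.sin (2 * Real.pi * t) ∈ B}).toReal
              / s)
          atTop (nhds (μW B).toReal) :=
  wave_process_steady_state_general P X hindep hident
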